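/- arXiv:1802.01773 — 5 statements merged into one kernel-verified Lean document; each statement's English description precedes it below -/
import Mathlib

section
/- For every ribbon graph (α, σ) with e edges, n vertices and f faces, the integer n − e + f is even and satisfies n − e + f ≤ 2. Equivalently, the genus g defined by the Euler relation n − e + f = 2 − 2g is a nonnegative integer. -/
/-- The number of cycles (orbits, including fixed points) of a permutation. -/
noncomputable def permCycleCount {H : Type*} (σ : Equiv.Perm H) : ℕ :=
  Nat.card (Quot σ.SameCycle)

/-!
View `(σ, α)` as a hypermap on the darts `H`: vertices are the cycles of `σ`, edges the cycles
of `α`, faces the cycles of `σ⁻¹ * α`. The integer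
`|H| + 2 · #components - #vertices - #faces - #edges` vanishes for `σ = 1`. Multiplying `σ` by a
transposition `swap a b` with `a`, `b` in one cycle of `σ` splits that vertex in two, and
multiplies the face permutation by the transposition `swap (σ⁻¹ a) (σ⁻¹ b)`, which either splits
a face (and then at most one new component appears) or merges two faces (and then no component
is split). Either way the integer does not increase and keeps its parity, so by induction on
`σ` it is always even and nonnegative. For a connected ribbon graph it equals `2 - (n - e + f)`.
-/

open Equiv Equiv.Perm Subgroup MulAction

variable {H : Type*}

namespace Setoid

variable {s t : Setoid H}

theorem map_of_le_surjective (h : s ≤ t) : Function.Surjective (map_of_le h) :=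
  Quotient.ind fun x => ⟨Quotient.mk s x, rfl⟩

variable [Finite H]

theorem card_quotient_le_of_le (h : s ≤ t) : Nat.card (Quotient t) ≤ Nat.card (Quotient s) :=
  Nat.card_le_card_of_surjective _ (map_of_le_surjective h)

theorem card_quotient_lt_of_le (h : s ≤ t) {a b : H} (hs : ¬ s a b) (ht : t a b) :
    Nat.card (Quotient t) < Nat.card (Quotient s) := by
  have := Fintype.ofFinite (Quotient s)
  have := Fintype.ofFinite (Quotient t)
  simp only [Nat.card_eq_fintype_card]
  refine Fintype.card_lt_of_surjective_not_injective _ (map_of_le_surjective h) fun hinj => hs ?_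
  exact Quotient.exact (@hinj ⟦a⟧ ⟦b⟧ (Quotient.sound ht))

end Setoid

theorem Nat.card_le_card_add_one_of_injOn_compl {α β : Type*} [Finite β] (f : α → β) (b : α)
    (hf : Set.InjOn f {b}ᶜ) : Nat.card α ≤ Nat.card β + 1 := by
  classical
  rw [← Finite.card_option]
  refine Nat.card_le_card_of_injective (fun a => if a = b then none else some (f a)) ?_
  intro x y hxy
  dsimp only at hxy
  split_ifs at hxy with hx hy hy
  · exact hx.trans hy.symm
  · exact hf hx hy (Option.some_injective _ hxy)

theorem Subgroup.closure_insert_pair_mul_left {G : Type*} [Group G] (t α σ : G) :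
    closure {t, α, t * σ} = closure {t, α, σ} := by
  refine le_antisymm ((closure_le _).2 ?_) ((closure_le _).2 ?_) <;>
    simp only [Set.insert_subset_iff, Set.singleton_subset_iff]
  · exact ⟨subset_closure (by simp), subset_closure (by simp),
      mul_mem (subset_closure (by simp)) (subset_closure (by simp))⟩
  · refine ⟨subset_closure (by simp), subset_closure (by simp), ?_⟩
    simpa using mul_mem (inv_mem (subset_closure (Set.mem_insert t {α, t * σ})))
      (subset_closure (by simp : t * σ ∈ _))

namespace Equiv.Perm

noncomputable def orbitCount (G : Subgroup (Perm H)) : ℕ :=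
  Nat.card (orbitRel.Quotient G H)

section Orbits

variable {G K : Subgroup (Perm H)} {x y : H}

theorem orbitRel_perm_iff : orbitRel G H x y ↔ ∃ g ∈ G, g y = x := by
  simp [orbitRel_apply, mem_orbit_iff, Subgroup.smul_def, Perm.smul_def]

theorem orbitRel_of_mem {g : Perm H} (hg : g ∈ G) (x : H) : orbitRel G H (g x) x :=
  orbitRel_perm_iff.2 ⟨g, hg, rfl⟩

theorem orbitRel_mono (h : G ≤ K) : orbitRel G H ≤ orbitRel K H := fun _ _ hxy => by
  obtain ⟨g, hg, rfl⟩ := orbitRel_perm_iff.1 hxy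
  exact orbitRel_of_mem (h hg) _

theorem apply_eq_of_mem_closure {β : Type*} {S : Set (Perm H)} {f : H → β}
    (hf : ∀ s ∈ S, ∀ x, f (s x) = f x) {g : Perm H} (hg : g ∈ closure S) (x : H) :
    f (g x) = f x := by
  induction hg using closure_induction generalizing x with
  | mem s hs => exact hf s hs x
  | one => rfl
  | mul g h _ _ ihg ihh => exact (ihg (h x)).trans (ihh x)
  | inv g _ ihg => simpa using (ihg (g⁻¹ x)).symm

theorem orbitRel_closure_le_ker {β : Type*} {S : Set (Perm H)} {f : H → β}
    (hf : ∀ s ∈ S, ∀ x, f (s x) = f x) : orbitRel (closure S) H ≤ Setoid.ker f := by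
  intro x y hxy
  obtain ⟨g, hg, rfl⟩ := orbitRel_perm_iff.1 hxy
  exact apply_eq_of_mem_closure hf hg y

theorem SameCycle.setoid_eq_orbitRel (σ : Perm H) :
    SameCycle.setoid σ = orbitRel (zpowers σ) H := by
  ext x y
  rw [orbitRel_perm_iff, exists_mem_zpowers]
  exact sameCycle_comm

theorem SameCycle.orbitRel {σ : Perm H} (hσ : σ ∈ G) (h : σ.SameCycle x y) :
    orbitRel G H x y :=
  orbitRel_mono (zpowers_le.2 hσ) (by rwa [← SameCycle.setoid_eq_orbitRel])

theorem SameCycle.apply_eq {β : Type*} {σ : Perm H} {f : H → β} (hf : ∀ x, f (σ x) = f x)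
    (h : σ.SameCycle x y) : f x = f y := by
  obtain ⟨i, rfl⟩ := h
  have hmem : σ ^ i ∈ closure {σ} := zpow_mem (subset_closure (Set.mem_singleton σ)) i
  exact (apply_eq_of_mem_closure (by rintro s rfl; exact hf) hmem x).symm

theorem permCycleCount_eq_orbitCount (σ : Perm H) :
    permCycleCount σ = orbitCount (zpowers σ) := by
  change Nat.card (Quotient (SameCycle.setoid σ)) = _
  rw [SameCycle.setoid_eq_orbitRel]
  rfl

theorem permCycleCount_one : permCycleCount (1 : Perm H) = Nat.card H := by
  refine (Nat.card_eq_of_bijective (Quot.mk _) ⟨fun x y hxy => ?_, Quot.exists_rep⟩).symm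
  exact sameCycle_one.1 (Quotient.exact (s := SameCycle.setoid 1) hxy)

theorem orbitCount_eq_of_orbitRel_eq (h : orbitRel G H = orbitRel K H) :
    orbitCount G = orbitCount K := by
  unfold orbitCount orbitRel.Quotient
  rw [h]

theorem orbitRel_closure_pair_of_sameCycle_inv_mul {α τ : Perm H} {a b : H}
    (h : (τ⁻¹ * α).SameCycle (τ⁻¹ a) (τ⁻¹ b)) : orbitRel (closure {α, τ}) H a b := by
  have hτ : τ⁻¹ ∈ closure {α, τ} := inv_mem (subset_closure (by simp))
  refine Quotient.exact (?_ : (⟦a⟧ : Quotient (orbitRel (closure {α, τ}) H)) = ⟦b⟧)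
  rw [← Quotient.sound (orbitRel_of_mem hτ a), ← Quotient.sound (orbitRel_of_mem hτ b)]
  exact Quotient.sound (h.orbitRel (mul_mem hτ (subset_closure (by simp))))

theorem orbitCount_antitone [Finite H] (h : G ≤ K) : orbitCount K ≤ orbitCount G :=
  Setoid.card_quotient_le_of_le (orbitRel_mono h)

end Orbits

section AddSwap

variable [DecidableEq H] {S : Set (Perm H)} {a b : H}

theorem apply_swap_apply_eq {β : Type*} {f : H → β} (h : f a = f b) (x : H) :
    f (swap a b x) = f x := by
  rcases eq_or_ne x a with rfl | hxa
  · rw [swap_apply_left, h]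
  rcases eq_or_ne x b with rfl | hxb
  · rw [swap_apply_right, h]
  rw [swap_apply_of_ne_of_ne hxa hxb]

theorem orbitRel_closure_insert_swap (h : orbitRel (closure S) H a b) :
    orbitRel (closure (insert (swap a b) S)) H = orbitRel (closure S) H := by
  refine le_antisymm ?_ (orbitRel_mono (closure_mono (Set.subset_insert _ _)))
  have hker : orbitRel (closure (insert (swap a b) S)) H ≤
      Setoid.ker (Quotient.mk (orbitRel (closure S) H)) := by
    refine orbitRel_closure_le_ker ?_
    rintro g (rfl | hg) x
    · exact apply_swap_apply_eq (Quotient.sound h) x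
    · exact Quotient.sound (orbitRel_of_mem (subset_closure hg) x)
  exact fun x y hxy => Quotient.exact (hker hxy)

theorem orbitCount_le_closure_insert_swap_add_one [Finite H] :
    orbitCount (closure S) ≤ orbitCount (closure (insert (swap a b) S)) + 1 := by
  classical
  set s := orbitRel (closure S) H
  have hle : s ≤ orbitRel (closure (insert (swap a b) S)) H :=
    orbitRel_mono (closure_mono (Set.subset_insert _ _))
  -- `collapse` merges the class of `b` into that of `a`, and so becomes invariant under `swap a b`
  let collapse : Quotient s → Quotient s := fun c => if c = ⟦b⟧ then ⟦a⟧ else c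
  have hker : orbitRel (closure (insert (swap a b) S)) H ≤
      Setoid.ker (collapse ∘ Quotient.mk s) := by
    refine orbitRel_closure_le_ker ?_
    rintro g (rfl | hg) x
    · refine apply_swap_apply_eq ?_ x
      by_cases hab : (⟦a⟧ : Quotient s) = ⟦b⟧ <;> simp [collapse, hab]
    · exact congrArg collapse (Quotient.sound (orbitRel_of_mem (subset_closure hg) x))
  refine Nat.card_le_card_add_one_of_injOn_compl (Setoid.map_of_le hle) ⟦b⟧ ?_
  intro c hc d hd hcd
  induction c using Quotient.ind with | _ x =>
  induction d using Quotient.ind with | _ y =>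
  have hxy := hker (Quotient.exact hcd)
  exact (if_neg hc).symm.trans (hxy.trans (if_neg hd))

end AddSwap

section FirstHit

variable {π ρ : Perm H} {p q : H} {j : ℕ}

theorem exists_first_pow_apply_mem_pair [Finite H] (π : Perm H) (p q : H) :
    ∃ j, 0 < j ∧ ((π ^ j) q = p ∨ (π ^ j) q = q) ∧
      ∀ i, 0 < i → i < j → (π ^ i) q ≠ p ∧ (π ^ i) q ≠ q := by
  classical
  have h : ∃ j, 0 < j ∧ ((π ^ j) q = p ∨ (π ^ j) q = q) :=
    ⟨orderOf π, orderOf_pos π, Or.inr (by rw [pow_orderOf_eq_one, one_apply])⟩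
  refine ⟨Nat.find h, (Nat.find_spec h).1, (Nat.find_spec h).2, fun i hi hij => ?_⟩
  exact not_or.1 fun hmem => Nat.find_min h hij ⟨hi, hmem⟩

theorem sameCycle_iff_first_pow_apply_eq [Finite H] (hpq : p ≠ q) (hj : 0 < j)
    (hmem : (π ^ j) q = p ∨ (π ^ j) q = q)
    (hmin : ∀ i, 0 < i → i < j → (π ^ i) q ≠ p ∧ (π ^ i) q ≠ q) :
    π.SameCycle q p ↔ (π ^ j) q = p := by
  refine ⟨fun h => hmem.resolve_right fun hq => ?_, fun h => ⟨j, by simpa using h⟩⟩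
  obtain ⟨n, hn⟩ := h.exists_nat_pow_eq
  -- the orbit of `q` has period `j`, so it meets `p` before time `j`
  have hmod : (π ^ (n % j)) q = p := by
    rw [← hn, ← Nat.mod_add_div n j, pow_add, pow_mul, mul_apply,
      pow_apply_eq_self_of_apply_eq_self hq, Nat.mod_add_div]
  rcases Nat.eq_zero_or_pos (n % j) with h0 | hpos
  · rw [h0, pow_zero, one_apply] at hmod
    exact hpq hmod.symm
  · exact (hmin _ hpos (Nat.mod_lt n hj)).1 hmod

theorem swap_mul_pow_succ_apply [DecidableEq H]
    (hmin : ∀ i, 0 < i → i < j → (ρ ^ i) q ≠ p ∧ (ρ ^ i) q ≠ q) :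
    ∀ i < j, ((swap p q * ρ) ^ (i + 1)) q = swap p q ((ρ ^ (i + 1)) q) := by
  intro i
  induction i with
  | zero => simp
  | succ i ih =>
    intro hij
    obtain ⟨hp, hq⟩ := hmin (i + 1) i.succ_pos (by omega)
    rw [pow_succ', mul_apply, ih (by omega), swap_apply_of_ne_of_ne hp hq, mul_apply,
      ← mul_apply ρ, ← pow_succ']

theorem sameCycle_swap_mul_iff [Finite H] [DecidableEq H] (hpq : p ≠ q) :
    (swap p q * ρ).SameCycle q p ↔ ¬ ρ.SameCycle q p := by
  obtain ⟨j, hj, hmem, hmin⟩ := exists_first_pow_apply_mem_pair ρ p q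
  have hwalk := swap_mul_pow_succ_apply hmin
  have hlast : ((swap p q * ρ) ^ j) q = swap p q ((ρ ^ j) q) := by
    obtain ⟨i, rfl⟩ := Nat.exists_eq_add_one_of_ne_zero hj.ne'
    exact hwalk i i.lt_succ_self
  -- `swap p q * ρ` follows `ρ` until time `j`, so `j` is its first hitting time too
  have hmem' : ((swap p q * ρ) ^ j) q = p ∨ ((swap p q * ρ) ^ j) q = q := by
    rw [hlast]
    rcases hmem with h | h <;> simp [h]
  have hmin' : ∀ i, 0 < i → i < j →
      ((swap p q * ρ) ^ i) q ≠ p ∧ ((swap p q * ρ) ^ i) q ≠ q := by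
    intro i hi hij
    obtain ⟨k, rfl⟩ := Nat.exists_eq_add_one_of_ne_zero hi.ne'
    rw [hwalk k (by omega), swap_apply_of_ne_of_ne (hmin _ hi hij).1 (hmin _ hi hij).2]
    exact hmin _ hi hij
  rw [sameCycle_iff_first_pow_apply_eq hpq hj hmem' hmin',
    sameCycle_iff_first_pow_apply_eq hpq hj hmem hmin, hlast]
  rcases hmem with h | h <;> simp [h, hpq.symm]

end FirstHit

section CycleCountSwap

variable [DecidableEq H] {ρ : Perm H} {p q : H}

theorem SameCycle.setoid_swap_mul_le (h : ρ.SameCycle p q) :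
    SameCycle.setoid (swap p q * ρ) ≤ SameCycle.setoid ρ := by
  intro x y hxy
  refine Quotient.exact
    (SameCycle.apply_eq (f := Quotient.mk (SameCycle.setoid ρ)) (fun x => ?_) hxy)
  rw [mul_apply, apply_swap_apply_eq (Quotient.sound h)]
  exact Quotient.sound (sameCycle_apply_left.2 (SameCycle.refl ρ x))

variable [Finite H]

theorem permCycleCount_le_swap_mul_add_one (ρ : Perm H) (p q : H) :
    permCycleCount ρ ≤ permCycleCount (swap p q * ρ) + 1 := by
  rw [permCycleCount_eq_orbitCount, permCycleCount_eq_orbitCount, zpowers_eq_closure]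
  calc orbitCount (closure {ρ}) ≤ orbitCount (closure {swap p q, ρ}) + 1 :=
        orbitCount_le_closure_insert_swap_add_one
    _ ≤ orbitCount (zpowers (swap p q * ρ)) + 1 := by
        refine Nat.add_le_add_right (orbitCount_antitone (zpowers_le.2 ?_)) 1
        exact mul_mem (subset_closure (by simp)) (subset_closure (by simp))

theorem permCycleCount_swap_mul_of_sameCycle (hpq : p ≠ q) (h : ρ.SameCycle p q) :
    permCycleCount (swap p q * ρ) = permCycleCount ρ + 1 := by
  refine le_antisymm ?_ (Setoid.card_quotient_lt_of_le (SameCycle.setoid_swap_mul_le h) ?_ h.symm)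
  · simpa using permCycleCount_le_swap_mul_add_one (swap p q * ρ) p q
  · exact (sameCycle_swap_mul_iff hpq).not_left.2 h.symm

theorem permCycleCount_swap_mul_of_not_sameCycle (hpq : p ≠ q) (h : ¬ ρ.SameCycle p q) :
    permCycleCount (swap p q * ρ) + 1 = permCycleCount ρ := by
  have hmerge := (sameCycle_swap_mul_iff hpq).2 (mt SameCycle.symm h)
  simpa using (permCycleCount_swap_mul_of_sameCycle hpq hmerge.symm).symm

end CycleCountSwap

/-- For the hypermap with vertices `σ`, edges `α` and faces `σ⁻¹ * α`, the Euler formula makes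
this the sum over the connected components of twice their genus. -/
noncomputable def twiceGenus (α σ : Perm H) : ℤ :=
  Nat.card H + 2 * orbitCount (closure {α, σ}) - permCycleCount σ - permCycleCount (σ⁻¹ * α) -
    permCycleCount α

theorem twiceGenus_one (α : Perm H) : twiceGenus α 1 = 0 := by
  rw [twiceGenus, Set.pair_comm, closure_insert_one, ← zpowers_eq_closure,
    ← permCycleCount_eq_orbitCount, permCycleCount_one, inv_one, one_mul]
  ring

theorem twiceGenus_swap_mul_le_and_even_sub [Finite H] [DecidableEq H] (α : Perm H)
    {σ : Perm H} {a b : H} (hab : a ≠ b) (h : σ.SameCycle a b) :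
    twiceGenus α (swap a b * σ) ≤ twiceGenus α σ ∧
      Even (twiceGenus α σ - twiceGenus α (swap a b * σ)) := by
  set σ' := swap a b * σ with hσ'
  set p := σ⁻¹ a
  set q := σ⁻¹ b
  have hpq : p ≠ q := σ⁻¹.injective.ne hab
  have hvert : permCycleCount σ' = permCycleCount σ + 1 :=
    permCycleCount_swap_mul_of_sameCycle hab h
  have hfaces : σ'⁻¹ * α = swap p q * (σ⁻¹ * α) := by
    rw [swap_apply_apply, hσ', mul_inv_rev, swap_inv, inv_inv]
    group
  have hrel : orbitRel (closure {swap a b, α, σ'}) H = orbitRel (closure {α, σ}) H := by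
    rw [closure_insert_pair_mul_left]
    exact orbitRel_closure_insert_swap (h.orbitRel (subset_closure (by simp)))
  by_cases hsplit : (σ⁻¹ * α).SameCycle p q
  · have hface := permCycleCount_swap_mul_of_sameCycle hpq hsplit
    have horbits : orbitCount (closure {α, σ'}) ≤ orbitCount (closure {α, σ}) + 1 :=
      (orbitCount_le_closure_insert_swap_add_one (S := {α, σ'})).trans_eq
        (by rw [orbitCount_eq_of_orbitRel_eq hrel])
    refine ⟨?_, ⟨orbitCount (closure {α, σ}) + 1 - orbitCount (closure {α, σ'}), ?_⟩⟩ <;>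
      simp only [twiceGenus, hfaces, hface, hvert] <;> push_cast <;> omega
  · have hface := permCycleCount_swap_mul_of_not_sameCycle hpq hsplit
    have hab' : orbitRel (closure {α, σ'}) H a b := by
      have ha : σ'⁻¹ a = q := by simp [hσ', q]
      have hb : σ'⁻¹ b = p := by simp [hσ', p]
      refine orbitRel_closure_pair_of_sameCycle_inv_mul ?_
      rw [ha, hb, hfaces]
      exact (sameCycle_swap_mul_iff hpq).2 (mt SameCycle.symm hsplit)
    have horbits' : orbitCount (closure {α, σ'}) = orbitCount (closure {α, σ}) := by
      rw [← orbitCount_eq_of_orbitRel_eq hrel, orbitCount_eq_of_orbitRel_eq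
        (orbitRel_closure_insert_swap hab')]
    refine ⟨?_, ⟨0, ?_⟩⟩ <;> simp only [twiceGenus, hfaces, ← hface, hvert, horbits'] <;>
      push_cast <;> omega

theorem twiceGenus_nonneg_and_even [Fintype H] [DecidableEq H] (α σ : Perm H) :
    0 ≤ twiceGenus α σ ∧ Even (twiceGenus α σ) := by
  induction hn : σ.support.card using Nat.strong_induction_on generalizing σ with
  | _ n ih =>
  rcases eq_or_ne σ 1 with rfl | hσ
  · simp [twiceGenus_one]
  obtain ⟨a, ha⟩ : ∃ a, σ a ≠ a := by
    by_contra! hfix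
    exact hσ (Perm.ext hfix)
  obtain ⟨hle, hdiff⟩ := twiceGenus_swap_mul_le_and_even_sub α (Ne.symm ha)
    (sameCycle_apply_right.2 (SameCycle.refl σ a))
  obtain ⟨hnonneg, heven⟩ := ih _ (hn ▸ card_support_swap_mul ha) _ rfl
  exact ⟨hnonneg.trans hle, by simpa using hdiff.add heven⟩

theorem two_mul_permCycleCount_of_involutive {α : Perm H} (hinv : Function.Involutive α)
    (hfree : ∀ x, α x ≠ x) : 2 * permCycleCount α = Nat.card H := by
  rcases isEmpty_or_nonempty H with hH | ⟨⟨x₀⟩⟩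
  · simp [permCycleCount]
  have hsq : α ^ 2 = 1 := Perm.ext hinv
  have horder : orderOf α = 2 := orderOf_eq_prime hsq fun h => hfree x₀ (by rw [h]; rfl)
  have hstab : ∀ x : H, stabilizer (zpowers α) x = ⊥ := by
    intro x
    refine (Subgroup.eq_bot_iff_forall _).2 fun ⟨g, hg⟩ hgx => ?_
    obtain ⟨k, rfl⟩ := mem_zpowers_iff.1 hg
    rw [mem_stabilizer_iff, Subgroup.smul_def, Perm.smul_def] at hgx
    rcases Int.even_or_odd' k with ⟨m, rfl | rfl⟩
    · ext1
      simp [zpow_mul, hsq]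
    · exact absurd (by simpa [zpow_add, zpow_mul, hsq] using hgx) (hfree x)
  rw [permCycleCount_eq_orbitCount, orbitCount,
    Nat.card_congr (selfEquivOrbitsQuotientProd hstab), Nat.card_prod, Nat.card_zpowers, horder,
    mul_comm]

end Equiv.Perm

theorem stmt2_general (e : ℕ)
    (α σ : Equiv.Perm (Fin (2 * e)))
    (hinv : ∀ h, α (α h) = h)
    (hfpf : ∀ h, α h ≠ h)
    (htrans : ∀ h h' : Fin (2 * e),
      ∃ g ∈ Subgroup.closure ({α, σ} : Set (Equiv.Perm (Fin (2 * e)))), g h = h') :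
    (Even ((permCycleCount σ : ℤ) - e + permCycleCount (σ⁻¹ * α)) ∧
      (permCycleCount σ : ℤ) - e + permCycleCount (σ⁻¹ * α) ≤ 2) ∧
    ∃ g : ℕ, (permCycleCount σ : ℤ) - e + permCycleCount (σ⁻¹ * α) = 2 - 2 * g := by
  have hedges : permCycleCount α = e := by
    have := two_mul_permCycleCount_of_involutive hinv hfpf
    rw [Nat.card_fin] at this
    omega
  have hconnected : orbitCount (closure {α, σ}) ≤ 1 := by
    refine Finite.card_le_one_iff_subsingleton.2 ⟨Quotient.ind₂ fun x y => Quotient.sound ?_⟩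
    exact orbitRel_perm_iff.2 (htrans y x)
  obtain ⟨hnonneg, k, hk⟩ := twiceGenus_nonneg_and_even α σ
  rw [twiceGenus, Nat.card_fin, hedges] at hk hnonneg
  refine ⟨⟨⟨orbitCount (closure {α, σ}) - k, by omega⟩, by omega⟩,
    k.toNat + 1 - orbitCount (closure {α, σ}), by omega⟩

/-- For a ribbon graph with `e` edges, `n` vertices (cycles of `σ`)
and `f` faces (cycles of `σ⁻¹ ∘ α`), the integer `n - e + f` is even and at
most `2`; equivalently the genus defined by `n - e + f = 2 - 2g` is a
nonnegative integer. -/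
theorem stmt2 (e : ℕ) (he : 1 ≤ e)
    (α σ : Equiv.Perm (Fin (2 * e)))
    (hinv : ∀ h, α (α h) = h)
    (hfpf : ∀ h, α h ≠ h)
    (htrans : ∀ h h' : Fin (2 * e),
      ∃ g ∈ Subgroup.closure ({α, σ} : Set (Equiv.Perm (Fin (2 * e)))), g h = h') :
    (Even ((permCycleCount σ : ℤ) - e + permCycleCount (σ⁻¹ * α)) ∧
      (permCycleCount σ : ℤ) - e + permCycleCount (σ⁻¹ * α) ≤ 2) ∧
    ∃ g : ℕ, (permCycleCount σ : ℤ) - e + permCycleCount (σ⁻¹ * α) = 2 - 2 * g :=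
  stmt2_general e α σ hinv hfpf htrans
end

section
/- For all positive integers e and all integers g ≥ 0, the number m_1(e, g) of equivalence classes of rooted ribbon graphs of genus g with e edges satisfies m_1(e, g) = Σ_{n=1}^{e+1} (2e/n!) Σ_{μ1+⋯+μn=2e, μi ≥ 1} C_{g,n}(μ1, …, μn)/(μ1⋯μn), where the inner sum is over all ordered n-tuples of positive integers summing to 2e and the equality holds in ℚ. -/
/-- A decorated marked ribbon graph (map) of genus `g` with `n` labeled
vertices, vertex `i` having degree `μ i`.  The set of half-edges is
`Fin (∑ i, μ i)`; `α` is the fixed-point-free edge involution; `σ` is the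
vertex permutation; `v` assigns to a half-edge its vertex label (the fibers of
`v` are exactly the cycles of `σ`, the fiber of `i` having `μ i` elements);
`dec i` is the chosen (decorating) half-edge at vertex `i`.  The genus
condition is the Euler relation `n' - e + f = 2 - 2g` (multiplied by 2, with
`2e = ∑ μ i`). -/
structure DecMap (g n : ℕ) (μ : Fin n → ℕ) where
  α : Equiv.Perm (Fin (∑ i, μ i))
  σ : Equiv.Perm (Fin (∑ i, μ i))
  hinv : ∀ h, α (α h) = h
  hfpf : ∀ h, α h ≠ h
  htrans : ∀ h h', ∃ p ∈ Subgroup.closure ({α, σ} : Set (Equiv.Perm (Fin (∑ i, μ i)))), p h = h'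
  v : Fin (∑ i, μ i) → Fin n
  hvσ : ∀ h, v (σ h) = v h
  horb : ∀ h h', v h = v h' → σ.SameCycle h h'
  hdeg : ∀ i, (Finset.univ.filter fun h => v h = i).card = μ i
  dec : Fin n → Fin (∑ i, μ i)
  hdec : ∀ i, v (dec i) = i
  hgenus : 2 * (permCycleCount σ : ℤ) - (∑ i, μ i : ℤ) + 2 * (permCycleCount (σ⁻¹ * α) : ℤ)
      = 4 - 4 * g

/-- Marked isomorphism of decorated marked graphs: a relabeling of the
half-edges intertwining the `α`'s and `σ`'s, fixing each vertex label and
carrying chosen half-edges to chosen half-edges. -/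
def DecMapRel (g n : ℕ) (μ : Fin n → ℕ) : DecMap g n μ → DecMap g n μ → Prop :=
  fun Γ Γ' => ∃ ψ : Equiv.Perm (Fin (∑ i, μ i)),
    ψ * Γ.α = Γ'.α * ψ ∧ ψ * Γ.σ = Γ'.σ * ψ ∧
    (∀ h, Γ'.v (ψ h) = Γ.v h) ∧ (∀ i, ψ (Γ.dec i) = Γ'.dec i)

/-- `Cgn g n μ` : the number of equivalence classes of decorated marked ribbon
graphs of genus `g` with `n` vertices of respective degrees `μ 0, …, μ (n-1)`. -/
noncomputable def Cgn (g n : ℕ) (μ : Fin n → ℕ) : ℕ :=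
  Nat.card (Quot (DecMapRel g n μ))

/-- The double factorial. -/
def dfact : ℕ → ℕ
  | 0 => 1
  | 1 => 1
  | n + 2 => (n + 2) * dfact n

/-- `gfun μ = 2^⌊μ/2⌋ (2⌊(μ-1)/2⌋+1)!! / ⌊(μ-1)/2⌋!` for `μ ≥ 1`. -/
def gfun (μ : ℕ) : ℚ :=
  2 ^ (μ / 2) * dfact (2 * ((μ - 1) / 2) + 1) / Nat.factorial ((μ - 1) / 2)

/-- The compositions of `m` into `n` strictly positive parts, as a finset of
ordered `n`-tuples. -/
def comps (n m : ℕ) : Finset (Fin n → ℕ) :=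
  (Finset.Nat.antidiagonalTuple n m).filter fun μ => ∀ i, 1 ≤ μ i

/-- A rooted ribbon graph of genus `g` with `e` edges: a ribbon graph `(α, σ)`
satisfying the Euler relation `n - e + f = 2 - 2g`, together with a
distinguished root half-edge. -/
structure RootedMap (e g : ℕ) where
  α : Equiv.Perm (Fin (2 * e))
  σ : Equiv.Perm (Fin (2 * e))
  hinv : ∀ h, α (α h) = h
  hfpf : ∀ h, α h ≠ h
  htrans : ∀ h h', ∃ p ∈ Subgroup.closure ({α, σ} : Set (Equiv.Perm (Fin (2 * e)))), p h = h'
  hgenus : (permCycleCount σ : ℤ) - e + permCycleCount (σ⁻¹ * α) = 2 - 2 * g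
  root : Fin (2 * e)

/-- Rooted isomorphism: an isomorphism of ribbon graphs carrying root to root. -/
def RootedMapRel (e g : ℕ) : RootedMap e g → RootedMap e g → Prop :=
  fun Γ Γ' => ∃ ψ : Equiv.Perm (Fin (2 * e)),
    ψ * Γ.α = Γ'.α * ψ ∧ ψ * Γ.σ = Γ'.σ * ψ ∧ ψ Γ.root = Γ'.root

/-- `m1 e g` : the number of equivalence classes of rooted ribbon graphs of
genus `g` with `e` edges. -/
noncomputable def m1 (e g : ℕ) : ℕ := Nat.card (Quot (RootedMapRel e g))

/-!
The symmetric group on the `2e` half-edges acts freely by relabelling, both on rooted maps and on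
decorated marked graphs: a permutation commuting with the transitive group `⟨α, σ⟩` and fixing
one half-edge is the identity. Hence `m₁(e, g) · (2e)!` is `2e` times the number of genus-`g`
ribbon graphs on `{1, …, 2e}`, and `C_{g,n}(μ) · (2e)!` is the number of decorated marked graphs
on `{1, …, 2e}`. Forgetting the decorations divides the latter by `μ₁ ⋯ μₙ`; summing over all
degree sequences `μ` counts the ribbon graphs with `n` vertices together with a labelling of
their vertices, i.e. `n!` times the number of ribbon graphs with `n` vertices.
-/

open Equiv Finset

section Counting

variable {A B : Type*}

theorem Nat.card_eq_sum_card_fiber [Finite A] [DecidableEq B] (f : A → B) (S : Finset B)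
    (hf : ∀ a, f a ∈ S) : Nat.card A = ∑ b ∈ S, Nat.card {a // f a = b} := by
  cases nonempty_fintype A
  rw [Nat.card_eq_fintype_card, ← Finset.card_univ,
    Finset.card_eq_sum_card_fiberwise fun a _ => hf a]
  refine Finset.sum_congr rfl fun b _ => ?_
  rw [Nat.card_eq_fintype_card, Fintype.card_subtype]

theorem Nat.card_eq_mul_of_card_fiber [Finite A] [Finite B] (f : A → B) (k : ℕ)
    (hf : ∀ b, Nat.card {a // f a = b} = k) : Nat.card A = Nat.card B * k := by
  classical
  cases nonempty_fintype B
  rw [Nat.card_eq_sum_card_fiber f Finset.univ fun _ => Finset.mem_univ _,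
    Finset.sum_congr rfl fun b _ => hf b, Finset.sum_const, Finset.card_univ, smul_eq_mul,
    Nat.card_eq_fintype_card]

theorem Nat.card_equiv_fin [Finite A] (n : ℕ) :
    Nat.card (A ≃ Fin n) = if Nat.card A = n then n.factorial else 0 := by
  split_ifs with hA
  · obtain ⟨c⟩ : Nonempty (A ≃ Fin n) := Finite.card_eq.mp (by rwa [Nat.card_fin])
    rw [Nat.card_congr (c.equivCongr (Equiv.refl _)), Nat.card_perm, Nat.card_fin]
  · have : IsEmpty (A ≃ Fin n) := ⟨fun c => hA (by rw [Nat.card_congr c, Nat.card_fin])⟩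
    exact Nat.card_of_isEmpty

theorem MulAction.card_quot_mul_card_of_free {G X Y : Type*} [Group G] [Finite G] [Finite Y]
    [MulAction G Y] {r : X → X → Prop} (E : X ≃ Y) (hr : ∀ x x', r x x' ↔ ∃ g : G, g • E x = E x')
    (free : ∀ (g : G) (y : Y), g • y = y → g = 1) :
    Nat.card (Quot r) * Nat.card G = Nat.card Y := by
  have hquot : Quot r ≃ orbitRel.Quotient G Y :=
    Quot.congr E fun x x' => (hr x x').trans
      ⟨fun ⟨g, hg⟩ => ⟨g⁻¹, by simp [← hg]⟩, fun ⟨g, hg⟩ => ⟨g⁻¹, by simp [← hg]⟩⟩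
  have horbit : ∀ y : Y, Nat.card (orbit G y) = Nat.card G := fun y => by
    rw [Nat.card_coe_set_eq, ← index_stabilizer, show stabilizer G y = ⊥ from
      (Subgroup.eq_bot_iff_forall _).mpr fun g hg => free g y hg, Subgroup.index_bot]
  have := Fintype.ofFinite (orbitRel.Quotient G Y)
  rw [Nat.card_congr (selfEquivSigmaOrbits G Y), Nat.card_sigma,
    Finset.sum_congr rfl fun ω _ => horbit _, Finset.sum_const, Finset.card_univ, smul_eq_mul,
    Nat.card_congr hquot, Nat.card_eq_fintype_card]

end Counting

section Permutations

variable {H : Type*}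

theorem permCycleCount_conj (ψ σ : Perm H) : permCycleCount (ψ * σ * ψ⁻¹) = permCycleCount σ :=
  Nat.card_congr (Quot.congr ψ fun a b => by simp [Perm.sameCycle_conj]).symm

theorem one_le_permCycleCount [Finite H] [Nonempty H] (σ : Perm H) : 1 ≤ permCycleCount σ :=
  have : Nonempty (Quot σ.SameCycle) := ⟨Quot.mk _ (Classical.arbitrary H)⟩
  Nat.card_pos

theorem Equiv.Perm.eq_one_of_commute_of_apply_eq {α σ ψ : Perm H}
    (htrans : ∀ h h', ∃ p ∈ Subgroup.closure ({α, σ} : Set (Perm H)), p h = h')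
    (hα : ψ * α = α * ψ) (hσ : ψ * σ = σ * ψ) {h₀ : H} (hfix : ψ h₀ = h₀) : ψ = 1 := by
  have hcentral : Subgroup.closure ({α, σ} : Set (Perm H)) ≤ Subgroup.centralizer {ψ} := by
    rw [Subgroup.closure_le]
    rintro p (rfl | rfl) q rfl <;> assumption
  ext x
  obtain ⟨p, hp, rfl⟩ := htrans h₀ x
  have hcomm : ψ * p = p * ψ := Subgroup.mem_centralizer_iff.mp (hcentral hp) ψ rfl
  simpa [hfix] using congrArg (· h₀) hcomm

theorem Equiv.Perm.SameCycle.apply_eq_s5 {β : Type*} {σ : Perm H} {v : H → β}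
    (hv : ∀ h, v (σ h) = v h) {a b : H} (hab : σ.SameCycle a b) : v a = v b := by
  obtain ⟨k, rfl⟩ := hab
  suffices ∀ (k : ℤ) (x : H), v ((σ ^ k) x) = v x from (this k a).symm
  intro k
  induction k using Int.induction_on with
  | zero => intro x; rw [zpow_zero, Perm.one_apply]
  | succ k ih => intro x; rw [zpow_add_one, Perm.mul_apply, ih, hv]
  | pred k ih =>
    intro x
    rw [zpow_sub_one, Perm.mul_apply, ih, ← hv (σ⁻¹ x), Perm.coe_inv, apply_symm_apply]

noncomputable def Equiv.Perm.quotSameCycleEquiv {β : Type*} {σ : Perm H} {v : H → β}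
    (hvσ : ∀ h, v (σ h) = v h) (horb : ∀ h h', v h = v h' → σ.SameCycle h h')
    (hv : Function.Surjective v) : Quot σ.SameCycle ≃ β :=
  Equiv.ofBijective (Quot.lift v fun _ _ => SameCycle.apply_eq_s5 hvσ)
    ⟨fun x y => Quot.induction_on₂ x y fun a b hab => Quot.sound (horb a b hab),
      (Quot.surjective_lift _).mpr hv⟩

end Permutations

/-- The Euler relation `n - e + f = 2 - 2g` is doubled so as to involve only `2e = |H|`. -/
@[ext] structure RibbonGraph (H : Type*) (g : ℕ) where
  α : Perm H
  σ : Perm H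
  hinv : ∀ h, α (α h) = h
  hfpf : ∀ h, α h ≠ h
  htrans : ∀ h h', ∃ p ∈ Subgroup.closure ({α, σ} : Set (Perm H)), p h = h'
  hgenus : 2 * (permCycleCount σ : ℤ) - Nat.card H + 2 * (permCycleCount (σ⁻¹ * α) : ℤ)
      = 4 - 4 * g

namespace RibbonGraph

variable {H : Type*} {g : ℕ}

instance [Finite H] : Finite (RibbonGraph H g) :=
  Finite.of_injective (fun Γ => (Γ.α, Γ.σ)) fun _ _ h => RibbonGraph.ext
    (congrArg Prod.fst h) (congrArg Prod.snd h)

instance : SMul (Perm H) (RibbonGraph H g) where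
  smul ψ Γ :=
    { α := ψ * Γ.α * ψ⁻¹
      σ := ψ * Γ.σ * ψ⁻¹
      hinv := fun h => by simp [Γ.hinv]
      hfpf := fun h => by simpa [eq_symm_apply] using Γ.hfpf (ψ⁻¹ h)
      htrans := fun h h' => by
        obtain ⟨p, hp, hph⟩ := Γ.htrans (ψ.symm h) (ψ.symm h')
        refine ⟨MulAut.conj ψ p, ?_, by simp [hph]⟩
        have := Subgroup.mem_map_of_mem (MulAut.conj ψ).toMonoidHom hp
        rwa [MonoidHom.map_closure, Set.image_pair] at this
      hgenus := by
        rw [show (ψ * Γ.σ * ψ⁻¹)⁻¹ * (ψ * Γ.α * ψ⁻¹) = ψ * (Γ.σ⁻¹ * Γ.α) * ψ⁻¹ by group,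
          permCycleCount_conj, permCycleCount_conj]
        exact Γ.hgenus }

@[simp] theorem smul_α (ψ : Perm H) (Γ : RibbonGraph H g) : (ψ • Γ).α = ψ * Γ.α * ψ⁻¹ := rfl

@[simp] theorem smul_σ (ψ : Perm H) (Γ : RibbonGraph H g) : (ψ • Γ).σ = ψ * Γ.σ * ψ⁻¹ := rfl

instance : MulAction (Perm H) (RibbonGraph H g) where
  one_smul Γ := RibbonGraph.ext (by simp) (by simp)
  mul_smul ψ φ Γ := RibbonGraph.ext (by simp [mul_assoc]) (by simp [mul_assoc])

theorem smul_eq_iff {ψ : Perm H} {Γ Γ' : RibbonGraph H g} :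
    ψ • Γ = Γ' ↔ ψ * Γ.α = Γ'.α * ψ ∧ ψ * Γ.σ = Γ'.σ * ψ := by
  simp only [RibbonGraph.ext_iff, smul_α, smul_σ, mul_inv_eq_iff_eq_mul]

theorem eq_one_of_smul_eq {ψ : Perm H} {x : RibbonGraph H g × H} (hx : ψ • x = x) : ψ = 1 := by
  obtain ⟨hΓ, hroot⟩ := Prod.ext_iff.mp hx
  obtain ⟨hα, hσ⟩ := smul_eq_iff.mp hΓ
  exact Perm.eq_one_of_commute_of_apply_eq x.1.htrans hα hσ hroot

theorem permCycleCount_mem_Icc [Finite H] {e : ℕ} (hH : Nat.card H = 2 * e) (he : 1 ≤ e)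
    (Γ : RibbonGraph H g) : permCycleCount Γ.σ ∈ Finset.Icc 1 (e + 1) := by
  have : Nonempty H := (Nat.card_pos_iff.mp (by omega)).1
  have hσ := one_le_permCycleCount Γ.σ
  have hφ := one_le_permCycleCount (Γ.σ⁻¹ * Γ.α)
  have := Γ.hgenus
  rw [hH] at this
  exact Finset.mem_Icc.mpr ⟨hσ, by omega⟩

end RibbonGraph

abbrev MarkedGraph (H : Type*) (g n : ℕ) := Σ Γ : RibbonGraph H g, Quot Γ.σ.SameCycle ≃ Fin n

namespace MarkedGraph

variable {H : Type*} {g n : ℕ}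

def label (L : MarkedGraph H g n) (h : H) : Fin n := L.2 (Quot.mk _ h)

def degree [Fintype H] (L : MarkedGraph H g n) (i : Fin n) : ℕ := #{h | L.label h = i}

theorem degree_mem_comps [Fintype H] (L : MarkedGraph H g n) :
    L.degree ∈ comps n (Fintype.card H) := by
  refine Finset.mem_filter.mpr ⟨Finset.Nat.mem_antidiagonalTuple.mpr ?_, fun i => ?_⟩
  · exact (Finset.card_eq_sum_card_fiberwise fun h _ => Finset.mem_univ (L.label h)).symm
  · obtain ⟨c, hc⟩ := L.2.surjective i
    obtain ⟨h, rfl⟩ := Quot.exists_rep c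
    exact Finset.card_pos.mpr ⟨h, Finset.mem_filter.mpr ⟨Finset.mem_univ _, hc⟩⟩

theorem card_eq [Finite H] :
    Nat.card (MarkedGraph H g n) =
      Nat.card {Γ : RibbonGraph H g // permCycleCount Γ.σ = n} * n.factorial := by
  have := Fintype.ofFinite (RibbonGraph H g)
  rw [Nat.card_sigma, Finset.sum_congr rfl fun Γ _ => Nat.card_equiv_fin n, Finset.sum_ite,
    Finset.sum_const_zero, add_zero, Finset.sum_const, smul_eq_mul, Nat.card_eq_fintype_card,
    Fintype.card_subtype]
  rfl

theorem card_fin_eq_sum (m : ℕ) :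
    Nat.card (MarkedGraph (Fin m) g n) =
      ∑ μ ∈ comps n m, Nat.card {L : MarkedGraph (Fin m) g n // L.degree = μ} :=
  Nat.card_eq_sum_card_fiber _ _ fun L => by simpa using L.degree_mem_comps

end MarkedGraph

attribute [ext] DecMap

namespace DecMap

variable {g n : ℕ} {μ : Fin n → ℕ}

instance : Finite (DecMap g n μ) :=
  Finite.of_injective (fun Δ => (Δ.α, Δ.σ, Δ.v, Δ.dec)) fun _ _ h => by
    simp only [Prod.mk.injEq] at h
    exact DecMap.ext h.1 h.2.1 h.2.2.1 h.2.2.2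

def toRibbonGraph (Δ : DecMap g n μ) : RibbonGraph (Fin (∑ i, μ i)) g :=
  ⟨Δ.α, Δ.σ, Δ.hinv, Δ.hfpf, Δ.htrans, by simpa using Δ.hgenus⟩

instance : SMul (Perm (Fin (∑ i, μ i))) (DecMap g n μ) where
  smul ψ Δ :=
    { α := ψ * Δ.α * ψ⁻¹
      σ := ψ * Δ.σ * ψ⁻¹
      hinv := (ψ • Δ.toRibbonGraph).hinv
      hfpf := (ψ • Δ.toRibbonGraph).hfpf
      htrans := (ψ • Δ.toRibbonGraph).htrans
      hgenus := by simpa [toRibbonGraph] using (ψ • Δ.toRibbonGraph).hgenus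
      v := fun h => Δ.v (ψ⁻¹ h)
      hvσ := fun h => by simpa using Δ.hvσ (ψ⁻¹ h)
      horb := fun h h' hv => by simpa [Perm.sameCycle_conj] using Δ.horb _ _ hv
      hdeg := fun i => by
        rw [← Δ.hdeg i]
        exact Finset.card_equiv ψ⁻¹ fun h => by simp
      dec := fun i => ψ (Δ.dec i)
      hdec := fun i => by simp [Δ.hdec i] }

@[simp] theorem smul_α (ψ : Perm (Fin (∑ i, μ i))) (Δ : DecMap g n μ) :
    (ψ • Δ).α = ψ * Δ.α * ψ⁻¹ := rfl

@[simp] theorem smul_σ (ψ : Perm (Fin (∑ i, μ i))) (Δ : DecMap g n μ) :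
    (ψ • Δ).σ = ψ * Δ.σ * ψ⁻¹ := rfl

@[simp] theorem smul_v (ψ : Perm (Fin (∑ i, μ i))) (Δ : DecMap g n μ) :
    (ψ • Δ).v = fun h => Δ.v (ψ⁻¹ h) := rfl

@[simp] theorem smul_dec (ψ : Perm (Fin (∑ i, μ i))) (Δ : DecMap g n μ) :
    (ψ • Δ).dec = fun i => ψ (Δ.dec i) := rfl

instance : MulAction (Perm (Fin (∑ i, μ i))) (DecMap g n μ) where
  one_smul Δ := DecMap.ext (by simp) (by simp) (by ext; simp) (by simp)
  mul_smul ψ φ Δ := DecMap.ext (by simp [mul_assoc]) (by simp [mul_assoc]) (by ext; simp) (by simp)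

theorem decMapRel_iff {Δ Δ' : DecMap g n μ} : DecMapRel g n μ Δ Δ' ↔
    ∃ ψ : Perm (Fin (∑ i, μ i)), ψ • Δ = Δ' := by
  simp only [DecMapRel, DecMap.ext_iff, smul_α, smul_σ, smul_v, smul_dec, mul_inv_eq_iff_eq_mul,
    funext_iff]
  refine exists_congr fun ψ => and_congr_right' (and_congr_right' (and_congr_left' ?_))
  exact ⟨fun h x => by simpa using (h (ψ⁻¹ x)).symm, fun h x => by simpa using (h (ψ x)).symm⟩

theorem eq_one_of_smul_eq {ψ : Perm (Fin (∑ i, μ i))} {Δ : DecMap g n μ} (hΔ : ψ • Δ = Δ) :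
    ψ = 1 := by
  rcases isEmpty_or_nonempty (Fin (∑ i, μ i)) with hH | ⟨⟨h₀⟩⟩
  · exact Subsingleton.elim _ _
  obtain ⟨hα, hσ, -, hdec⟩ := DecMap.ext_iff.mp hΔ
  exact Perm.eq_one_of_commute_of_apply_eq Δ.htrans (mul_inv_eq_iff_eq_mul.mp hα)
    (mul_inv_eq_iff_eq_mul.mp hσ) (congrFun hdec (Δ.v h₀))

theorem Cgn_mul_factorial (g n : ℕ) (μ : Fin n → ℕ) :
    Cgn g n μ * (∑ i, μ i).factorial = Nat.card (DecMap g n μ) := by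
  rw [← Nat.card_fin (∑ i, μ i), ← Nat.card_perm]
  exact MulAction.card_quot_mul_card_of_free (Equiv.refl _) (fun _ _ => decMapRel_iff)
    fun _ _ => eq_one_of_smul_eq

theorem v_surjective (hμ : ∀ i, 1 ≤ μ i) (Δ : DecMap g n μ) : Function.Surjective Δ.v :=
  fun i => by
    obtain ⟨h, hh⟩ := Finset.card_pos.mp (Δ.hdeg i ▸ hμ i)
    exact ⟨h, (Finset.mem_filter.mp hh).2⟩

noncomputable def toMarkedGraph (hμ : ∀ i, 1 ≤ μ i) (Δ : DecMap g n μ) :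
    MarkedGraph (Fin (∑ i, μ i)) g n :=
  ⟨Δ.toRibbonGraph, Perm.quotSameCycleEquiv Δ.hvσ Δ.horb (Δ.v_surjective hμ)⟩

theorem degree_toMarkedGraph (hμ : ∀ i, 1 ≤ μ i) (Δ : DecMap g n μ) :
    (Δ.toMarkedGraph hμ).degree = μ :=
  funext Δ.hdeg

noncomputable def toMarkedGraphFiberEquiv (hμ : ∀ i, 1 ≤ μ i) (L : MarkedGraph (Fin (∑ i, μ i)) g n)
    (hL : L.degree = μ) :
    {Δ : DecMap g n μ // Δ.toMarkedGraph hμ = L} ≃ ∀ i, {h // L.label h = i} where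
  toFun Δ i := ⟨Δ.1.dec i, by obtain ⟨Δ, rfl⟩ := Δ; exact Δ.hdec i⟩
  invFun d :=
    ⟨{ α := L.1.α
       σ := L.1.σ
       hinv := L.1.hinv
       hfpf := L.1.hfpf
       htrans := L.1.htrans
       hgenus := by simpa using L.1.hgenus
       v := L.label
       hvσ := fun h => congrArg L.2 (Quot.sound (Perm.sameCycle_apply_left.mpr (.refl _ _)))
       horb := fun h h' hv =>
         (Perm.SameCycle.equivalence _).eqvGen_iff.mp (Quot.eqvGen_exact (L.2.injective hv))
       hdeg := congrFun hL
       dec := fun i => (d i).1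
       hdec := fun i => (d i).2 },
     Sigma.ext rfl (heq_of_eq (Equiv.ext fun c => Quot.inductionOn c fun _ => rfl))⟩
  left_inv := by rintro ⟨Δ, rfl⟩; rfl
  right_inv _ := rfl

theorem card_eq (hμ : ∀ i, 1 ≤ μ i) :
    Nat.card (DecMap g n μ) =
      Nat.card {L : MarkedGraph (Fin (∑ i, μ i)) g n // L.degree = μ} * ∏ i, μ i := by
  refine Nat.card_eq_mul_of_card_fiber
    (fun Δ => ⟨Δ.toMarkedGraph hμ, Δ.degree_toMarkedGraph hμ⟩) _ fun L => ?_
  rw [Nat.card_congr ((Equiv.subtypeEquivRight fun Δ => Subtype.ext_iff).trans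
    (toMarkedGraphFiberEquiv hμ L.1 L.2)), Nat.card_pi]
  refine Finset.prod_congr rfl fun i _ => ?_
  rw [Nat.card_eq_fintype_card, Fintype.card_subtype, ← congrFun L.2 i]
  rfl

end DecMap

namespace RootedMap

def equivProd (e g : ℕ) : RootedMap e g ≃ RibbonGraph (Fin (2 * e)) g × Fin (2 * e) where
  toFun Γ :=
    (⟨Γ.α, Γ.σ, Γ.hinv, Γ.hfpf, Γ.htrans, by rw [Nat.card_fin]; push_cast; linarith [Γ.hgenus]⟩,
      Γ.root)
  invFun x := ⟨x.1.α, x.1.σ, x.1.hinv, x.1.hfpf, x.1.htrans,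
    by have := x.1.hgenus; rw [Nat.card_fin] at this; push_cast at this; linarith, x.2⟩
  left_inv _ := rfl
  right_inv _ := rfl

theorem rootedMapRel_iff {e g : ℕ} {Γ Γ' : RootedMap e g} :
    RootedMapRel e g Γ Γ' ↔ ∃ ψ : Perm (Fin (2 * e)), ψ • equivProd e g Γ = equivProd e g Γ' := by
  simp only [RootedMapRel, Prod.ext_iff, Prod.smul_fst, Prod.smul_snd, RibbonGraph.smul_eq_iff,
    Perm.smul_def, and_assoc]
  rfl

end RootedMap

theorem m1_mul_factorial (e g : ℕ) :
    m1 e g * (2 * e).factorial = Nat.card (RibbonGraph (Fin (2 * e)) g) * (2 * e) := by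
  have hperm : Nat.card (Perm (Fin (2 * e))) = (2 * e).factorial := by
    rw [Nat.card_perm, Nat.card_fin]
  have orbits := MulAction.card_quot_mul_card_of_free (RootedMap.equivProd e g)
    (fun _ _ => RootedMap.rootedMapRel_iff) fun _ _ => RibbonGraph.eq_one_of_smul_eq
  rwa [Nat.card_prod, Nat.card_fin, hperm] at orbits

theorem Cgn_div_prod_eq {g n m : ℕ} {μ : Fin n → ℕ} (hμ : μ ∈ comps n m) :
    (Cgn g n μ : ℚ) / ∏ i, (μ i : ℚ) =
      Nat.card {L : MarkedGraph (Fin m) g n // L.degree = μ} / m.factorial := by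
  obtain ⟨hsum, hpos⟩ := Finset.mem_filter.mp hμ
  obtain rfl := Finset.Nat.mem_antidiagonalTuple.mp hsum
  have hprod : (∏ i, (μ i : ℚ)) ≠ 0 :=
    Finset.prod_ne_zero_iff.mpr fun i _ => Nat.cast_ne_zero.mpr (by have := hpos i; omega)
  rw [div_eq_div_iff hprod (by positivity)]
  exact_mod_cast (DecMap.Cgn_mul_factorial g n μ).trans (DecMap.card_eq hpos)

theorem sum_Cgn_div_prod_eq (g n m : ℕ) :
    ∑ μ ∈ comps n m, (Cgn g n μ : ℚ) / ∏ i, (μ i : ℚ) =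
      Nat.card {Γ : RibbonGraph (Fin m) g // permCycleCount Γ.σ = n} * n.factorial /
        m.factorial := by
  rw [Finset.sum_congr rfl fun μ hμ => Cgn_div_prod_eq hμ, ← Finset.sum_div, ← Nat.cast_sum,
    ← MarkedGraph.card_fin_eq_sum, MarkedGraph.card_eq, Nat.cast_mul]

/-- the Walsh–Lehman formula for the number of rooted maps of
genus `g` with `e` edges in terms of the numbers `C_{g,n}(μ₁,…,μₙ)`. -/
theorem stmt5 (e : ℕ) (he : 1 ≤ e) (g : ℕ) :
    (m1 e g : ℚ) =
      ∑ n ∈ Finset.Icc 1 (e + 1),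
        (2 * e / (Nat.factorial n) : ℚ) *
          ∑ μ ∈ comps n (2 * e), (Cgn g n μ : ℚ) / ∏ i, (μ i : ℚ) := by
  have hcycles := Nat.card_eq_sum_card_fiber
    (fun Γ : RibbonGraph (Fin (2 * e)) g => permCycleCount Γ.σ) (Finset.Icc 1 (e + 1))
    (RibbonGraph.permCycleCount_mem_Icc (Nat.card_fin _) he)
  calc (m1 e g : ℚ)
      = 2 * e * Nat.card (RibbonGraph (Fin (2 * e)) g) / (2 * e).factorial := by
        rw [eq_div_iff (by positivity)]
        exact_mod_cast (m1_mul_factorial e g).trans (mul_comm _ _)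
    _ = ∑ n ∈ Finset.Icc 1 (e + 1), (2 * e *
          Nat.card {Γ : RibbonGraph (Fin (2 * e)) g // permCycleCount Γ.σ = n} /
            (2 * e).factorial : ℚ) := by
        rw [hcycles, Nat.cast_sum, Finset.mul_sum, Finset.sum_div]
    _ = _ := Finset.sum_congr rfl fun n _ => by
        rw [sum_Cgn_div_prod_eq]
        field_simp
end

section
/- Let Γ be a ribbon graph of genus g with n vertices whose multiset of vertex degrees {μ1, …, μn} has ρ distinct values occurring with multiplicities k1, …, kρ. Then the sum, over all marked-isomorphism classes of vertex labelings Γ_v of Γ realizing the ordered degree sequence (μ1, …, μn), of 1/|Aut_v(Γ_v)| equals k1!⋯kρ!/|Aut(Γ)|. -/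
set_option maxHeartbeats 1000000

/-- A vertex labeling of the ribbon graph `(α, σ)` realizing the ordered degree
sequence `μ`: a map `v` from half-edges to labels whose fibers are exactly the
cycles of `σ`, the fiber of `i` having `μ i` elements. -/
def Labeling (e n : ℕ) (σ : Equiv.Perm (Fin (2 * e))) (μ : Fin n → ℕ) : Type :=
  {v : Fin (2 * e) → Fin n //
    (∀ h, v (σ h) = v h) ∧ (∀ h h', v h = v h' → σ.SameCycle h h') ∧
    (∀ i, (Finset.univ.filter fun h => v h = i).card = μ i)}

/-- Two labelings are marked-isomorphic if some automorphism of `(α, σ)`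
transforms one into the other. -/
def LabelRel (e n : ℕ) (α σ : Equiv.Perm (Fin (2 * e))) (μ : Fin n → ℕ) :
    Labeling e n σ μ → Labeling e n σ μ → Prop :=
  fun v v' => ∃ ψ : Equiv.Perm (Fin (2 * e)),
    ψ * α = α * ψ ∧ ψ * σ = σ * ψ ∧ ∀ h, v'.1 (ψ h) = v.1 h

namespace Stmt13Aux

open Equiv MulAction Finset

variable {e n : ℕ} (α σ : Equiv.Perm (Fin (2 * e))) (μ : Fin n → ℕ)

/-- The automorphism group of the ribbon graph, as a subgroup of permutations
of the half-edges. -/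
def AutSub : Subgroup (Equiv.Perm (Fin (2 * e))) where
  carrier := {ψ | ψ * α = α * ψ ∧ ψ * σ = σ * ψ}
  one_mem' := ⟨by rw [one_mul, mul_one], by rw [one_mul, mul_one]⟩
  mul_mem' := fun ha hb => ⟨Commute.mul_left ha.1 hb.1, Commute.mul_left ha.2 hb.2⟩
  inv_mem' := fun ha => ⟨Commute.inv_left ha.1, Commute.inv_left ha.2⟩

lemma mem_AutSub {ψ : Equiv.Perm (Fin (2 * e))} :
    ψ ∈ AutSub α σ ↔ ψ * α = α * ψ ∧ ψ * σ = σ * ψ := Iff.rfl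

lemma sameCycle_of_commute {g : Equiv.Perm (Fin (2 * e))} (hg : g * σ = σ * g)
    {a b : Fin (2 * e)} (h : σ.SameCycle a b) : σ.SameCycle (g a) (g b) := by
  obtain ⟨k, hk⟩ := h
  refine ⟨k, ?_⟩
  have hc : g * σ ^ k = σ ^ k * g := (Commute.zpow_right (hg : Commute g σ) k)
  calc (σ ^ k) (g a) = (σ ^ k * g) a := rfl
    _ = (g * σ ^ k) a := by rw [hc]
    _ = g ((σ ^ k) a) := rfl
    _ = g b := by rw [hk]

lemma const_pow {w : Fin (2 * e) → Fin n} (hw : ∀ h, w (σ h) = w h)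
    (a : Fin (2 * e)) : ∀ m : ℕ, w ((σ ^ m) a) = w a := by
  intro m
  induction m with
  | zero => simp
  | succ m ih =>
    have : (σ ^ (m + 1)) a = σ ((σ ^ m) a) := by
      rw [pow_succ']; rfl
    rw [this, hw, ih]

lemma const_of_sameCycle {w : Fin (2 * e) → Fin n} (hw : ∀ h, w (σ h) = w h)
    {a b : Fin (2 * e)} (h : σ.SameCycle a b) : w a = w b := by
  obtain ⟨i, _, hi⟩ := h.exists_pow_eq'
  rw [← hi, const_pow σ hw]

/-- The action of `AutSub α σ` on labelings. -/
def autSmul (g : AutSub α σ) (v : Labeling e n σ μ) : Labeling e n σ μ :=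
  ⟨fun h => v.1 ((g : Equiv.Perm (Fin (2 * e)))⁻¹ h), by
    obtain ⟨v, h1, h2, h3⟩ := v
    obtain ⟨g, hg⟩ := g
    have hginv : g⁻¹ * σ = σ * g⁻¹ := Commute.inv_left (hg.2 : Commute g σ)
    refine ⟨fun h => ?_, fun h h' hh => ?_, fun i => ?_⟩
    · have : g⁻¹ (σ h) = σ (g⁻¹ h) := by
        calc g⁻¹ (σ h) = (g⁻¹ * σ) h := rfl
          _ = (σ * g⁻¹) h := by rw [hginv]
          _ = σ (g⁻¹ h) := rfl
      simp only [this, h1]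
    · have := sameCycle_of_commute σ hg.2 (h2 _ _ hh)
      simpa using this
    · rw [← h3 i]
      apply Finset.card_bij' (fun h _ => g⁻¹ h) (fun h _ => g h)
      · intro a ha
        simp only [Finset.mem_filter, Finset.mem_univ, true_and] at ha ⊢
        exact ha
      · intro a ha
        simp only [Finset.mem_filter, Finset.mem_univ, true_and] at ha ⊢
        simpa using ha
      · intro a _; simp
      · intro a _; simp⟩

instance : MulAction (AutSub α σ) (Labeling e n σ μ) where
  smul := autSmul α σ μ
  one_smul v := Subtype.ext <| funext fun h => by
    show v.1 _ = v.1 h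
    simp
  mul_smul g g' v := Subtype.ext <| funext fun h => by
    show v.1 (((g * g' : AutSub α σ) : Equiv.Perm (Fin (2 * e)))⁻¹ h)
      = v.1 ((g' : Equiv.Perm (Fin (2 * e)))⁻¹ ((g : Equiv.Perm (Fin (2 * e)))⁻¹ h))
    simp [mul_inv_rev]

lemma smul_coe (g : AutSub α σ) (v : Labeling e n σ μ) (h : Fin (2 * e)) :
    (g • v).1 h = v.1 ((g : Equiv.Perm (Fin (2 * e)))⁻¹ h) := rfl

lemma labelRel_iff (v v' : Labeling e n σ μ) :
    LabelRel e n α σ μ v v' ↔ ∃ g : AutSub α σ, g • v = v' := by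
  constructor
  · rintro ⟨ψ, h1, h2, h3⟩
    refine ⟨⟨ψ, h1, h2⟩, Subtype.ext <| funext fun h => ?_⟩
    rw [smul_coe]
    have := h3 (ψ⁻¹ h)
    simpa using this.symm
  · rintro ⟨⟨ψ, h1, h2⟩, hg⟩
    refine ⟨ψ, h1, h2, fun h => ?_⟩
    have := congrFun (congrArg Subtype.val hg.symm) (ψ h)
    rw [this, smul_coe]
    simp

lemma labelRel_equivalence : Equivalence (LabelRel e n α σ μ) := by
  constructor
  · intro v
    rw [labelRel_iff]
    exact ⟨1, one_smul _ _⟩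
  · intro v v' h
    rw [labelRel_iff] at h ⊢
    obtain ⟨g, hg⟩ := h
    exact ⟨g⁻¹, by rw [← hg, inv_smul_smul]⟩
  · intro v v' v'' h h'
    rw [labelRel_iff] at h h' ⊢
    obtain ⟨g, hg⟩ := h
    obtain ⟨g', hg'⟩ := h'
    exact ⟨g' * g, by rw [mul_smul, hg, hg']⟩

instance : Finite (Labeling e n σ μ) := Subtype.finite

end Stmt13Aux

/-- for a ribbon graph `Γ = (α, σ)` of genus `g` with `n`
vertices whose multiset of vertex degrees has `ρ` distinct values
`vals 0, …, vals (ρ-1)` with multiplicities `mult 0, …, mult (ρ-1)` in the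
degree sequence `μ`, the sum over marked-isomorphism classes of vertex
labelings of `Γ` realizing `(μ 0, …, μ (n-1))` of `1/|Aut_v(Γ_v)|` equals
`(mult 0)! ⋯ (mult (ρ-1))! / |Aut(Γ)|`. -/
theorem stmt13 (e n g : ℕ) (he : 1 ≤ e)
    (α σ : Equiv.Perm (Fin (2 * e)))
    (hinv : ∀ h, α (α h) = h)
    (hfpf : ∀ h, α h ≠ h)
    (htrans : ∀ h h' : Fin (2 * e),
      ∃ p ∈ Subgroup.closure ({α, σ} : Set (Equiv.Perm (Fin (2 * e)))), p h = h')
    (hn : permCycleCount σ = n)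
    (hgenus : (permCycleCount σ : ℤ) - e + permCycleCount (σ⁻¹ * α) = 2 - 2 * g)
    (μ : Fin n → ℕ) (hpos : ∀ i, 1 ≤ μ i)
    (ρ : ℕ) (vals : Fin ρ → ℕ) (mult : Fin ρ → ℕ)
    (hvals : Function.Injective vals)
    (hcover : ∀ i, ∃ r, μ i = vals r)
    (hmult : ∀ r, (Finset.univ.filter fun i => μ i = vals r).card = mult r)
    (hmultpos : ∀ r, 1 ≤ mult r)
    (hex : Nonempty (Labeling e n σ μ))
    (F : Quot (LabelRel e n α σ μ) → ℚ)
    (hF : ∀ v : Labeling e n σ μ,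
      F (Quot.mk _ v) = 1 / (Nat.card {ψ : Equiv.Perm (Fin (2 * e)) //
        ψ * α = α * ψ ∧ ψ * σ = σ * ψ ∧ ∀ h, v.1 (ψ h) = v.1 h} : ℚ)) :
    ∑ᶠ c : Quot (LabelRel e n α σ μ), F c
      = (∏ r, Nat.factorial (mult r) : ℚ) /
        (Nat.card {ψ : Equiv.Perm (Fin (2 * e)) //
          ψ * α = α * ψ ∧ ψ * σ = σ * ψ} : ℚ) := by
  classical
  open Stmt13Aux MulAction Finset in
  set G := Stmt13Aux.AutSub α σ with hGdef
  letI : Fintype (Labeling e n σ μ) := Fintype.ofFinite _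
  letI : Fintype (Quot (LabelRel e n α σ μ)) := Fintype.ofFinite _
  have hequiv : Equivalence (LabelRel e n α σ μ) := Stmt13Aux.labelRel_equivalence α σ μ
  -- identify the denominator with the cardinality of `G`
  have hD : Nat.card {ψ : Equiv.Perm (Fin (2 * e)) //
      ψ * α = α * ψ ∧ ψ * σ = σ * ψ} = Nat.card G :=
    Nat.card_congr (Equiv.subtypeEquivRight fun ψ => Iff.rfl)
  have hGpos : 0 < Nat.card G := Nat.card_pos
  -- the per-class identity
  have key : ∀ v : Labeling e n σ μ,
      F (Quot.mk _ v) * (Nat.card G : ℚ)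
        = ((Finset.univ.filter fun v' =>
            Quot.mk (LabelRel e n α σ μ) v' = Quot.mk _ v).card : ℚ) := by
    intro v
    rw [hF]
    have hstab : Nat.card {ψ : Equiv.Perm (Fin (2 * e)) //
        ψ * α = α * ψ ∧ ψ * σ = σ * ψ ∧ ∀ h, v.1 (ψ h) = v.1 h}
        = Nat.card (MulAction.stabilizer G v) := by
      refine Nat.card_congr ?_
      refine
        { toFun := fun ψ => ⟨⟨ψ.1, ψ.2.1, ψ.2.2.1⟩, ?_⟩
          invFun := fun g => ⟨(g.1 : Equiv.Perm (Fin (2 * e))), g.1.2.1, g.1.2.2, fun h => ?_⟩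
          left_inv := fun ψ => Subtype.ext rfl
          right_inv := fun g => Subtype.ext (Subtype.ext rfl) }
      · rw [MulAction.mem_stabilizer_iff]
        apply Subtype.ext; funext h
        rw [Stmt13Aux.smul_coe]
        have := ψ.2.2.2 ((ψ.1)⁻¹ h)
        simpa using this.symm
      · have hg : g.1 • v = v := g.2
        have := congrFun (congrArg Subtype.val hg) ((g.1 : Equiv.Perm (Fin (2 * e))) h)
        rw [Stmt13Aux.smul_coe] at this
        simpa using this.symm
    have horb : ((Finset.univ.filter fun v' =>
        Quot.mk (LabelRel e n α σ μ) v' = Quot.mk _ v).card : ℕ)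
        = Nat.card (MulAction.orbit G v) := by
      rw [← Fintype.card_subtype, ← Nat.card_eq_fintype_card]
      refine Nat.card_congr (Equiv.subtypeEquivRight fun v' => ?_)
      rw [Quot.eq, hequiv.eqvGen_iff]
      constructor
      · intro h
        have h' := hequiv.symm h
        rw [Stmt13Aux.labelRel_iff] at h'
        exact MulAction.mem_orbit_iff.mpr h'
      · intro h
        exact hequiv.symm ((Stmt13Aux.labelRel_iff α σ μ v v').mpr
          (MulAction.mem_orbit_iff.mp h))
    have hos : Nat.card (MulAction.orbit G v) * Nat.card (MulAction.stabilizer G v)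
        = Nat.card G := by
      rw [Nat.card_congr (MulAction.orbitEquivQuotientStabilizer G v)]
      exact (Subgroup.card_eq_card_quotient_mul_card_subgroup _).symm
    have hspos : 0 < Nat.card (MulAction.stabilizer G v) := Nat.card_pos
    rw [hstab, horb]
    have hcast : (Nat.card G : ℚ)
        = (Nat.card (MulAction.orbit G v) : ℚ) * (Nat.card (MulAction.stabilizer G v) : ℚ) := by
      exact_mod_cast hos.symm
    rw [hcast]
    have hne : (Nat.card (MulAction.stabilizer G v) : ℚ) ≠ 0 := by
      exact_mod_cast hspos.ne'
    rw [mul_comm ((Nat.card (MulAction.orbit G v) : ℚ)), ← mul_assoc,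
      one_div_mul_cancel hne, one_mul]
  -- count the labelings
  have hcount : (Fintype.card (Labeling e n σ μ) : ℕ) = ∏ r, Nat.factorial (mult r) := by
    obtain ⟨v₀⟩ := hex
    have hsurj : Function.Surjective v₀.1 := by
      intro i
      have hpos' : 0 < (Finset.univ.filter fun h => v₀.1 h = i).card := by
        rw [v₀.2.2.2 i]; exact hpos i
      obtain ⟨h, hh⟩ := Finset.card_pos.mp hpos'
      exact ⟨h, (Finset.mem_filter.mp hh).2⟩
    set μ' : Fin n → Fin ρ := fun i => (hcover i).choose with hμ'def
    have hμ' : ∀ i, μ i = vals (μ' i) := fun i => (hcover i).choose_spec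
    have hμ'iff : ∀ i r, μ' i = r ↔ μ i = vals r := by
      intro i r
      constructor
      · rintro rfl; exact hμ' i
      · intro h; exact hvals ((hμ' i).symm.trans h)
    -- the bijection with degree-preserving permutations
    set Φ : {p : Equiv.Perm (Fin n) // ∀ x, μ (p x) = μ x} → Labeling e n σ μ :=
      fun p => ⟨fun h => p.1 (v₀.1 h), by
        refine ⟨fun h => congrArg p.1 (v₀.2.1 h), fun h h' hh => ?_, fun i => ?_⟩
        · exact v₀.2.2.1 _ _ (p.1.injective hh)
        · have hset : (Finset.univ.filter fun h => p.1 (v₀.1 h) = i)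
              = Finset.univ.filter fun h => v₀.1 h = p.1.symm i := by
            ext h
            simp [Equiv.apply_eq_iff_eq_symm_apply]
          rw [hset, v₀.2.2.2]
          have := p.2 (p.1.symm i)
          rw [Equiv.apply_symm_apply] at this
          exact this.symm⟩ with hΦdef
    have hbij : Function.Bijective Φ := by
      constructor
      · intro p q hpq
        have hfun := congrArg Subtype.val hpq
        refine Subtype.ext (Equiv.ext fun x => ?_)
        obtain ⟨h, rfl⟩ := hsurj x
        exact congrFun hfun h
      · intro v
        have hvsurj : Function.Surjective v.1 := by
          intro i
          have hpos' : 0 < (Finset.univ.filter fun h => v.1 h = i).card := by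
            rw [v.2.2.2 i]; exact hpos i
          obtain ⟨h, hh⟩ := Finset.card_pos.mp hpos'
          exact ⟨h, (Finset.mem_filter.mp hh).2⟩
        set q : Fin n → Fin n := fun i => v.1 (hsurj i).choose with hqdef
        have hq : ∀ h, q (v₀.1 h) = v.1 h := by
          intro h
          exact Stmt13Aux.const_of_sameCycle σ v.2.1
            (v₀.2.2.1 _ _ (hsurj (v₀.1 h)).choose_spec)
        have hqsurj : Function.Surjective q := by
          intro j
          obtain ⟨h, rfl⟩ := hvsurj j
          exact ⟨v₀.1 h, hq h⟩
        have hqbij : Function.Bijective q := Finite.surjective_iff_bijective.mp hqsurj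
        set p : Equiv.Perm (Fin n) := Equiv.ofBijective q hqbij with hpdef
        have hcond : ∀ x, μ (p x) = μ x := by
          intro x
          obtain ⟨h, rfl⟩ := hsurj x
          have hp : p (v₀.1 h) = v.1 h := hq h
          rw [hp]
          rw [← v.2.2.2 (v.1 h), ← v₀.2.2.2 (v₀.1 h)]
          congr 1
          ext h'
          simp only [Finset.mem_filter, Finset.mem_univ, true_and]
          constructor
          · intro hh
            exact Stmt13Aux.const_of_sameCycle σ v₀.2.1 (v.2.2.1 _ _ hh)
          · intro hh
            exact Stmt13Aux.const_of_sameCycle σ v.2.1 (v₀.2.2.1 _ _ hh)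
        refine ⟨⟨p, hcond⟩, Subtype.ext (funext fun h => ?_)⟩
        exact hq h
    have step1 : Fintype.card (Labeling e n σ μ)
        = Nat.card {p : Equiv.Perm (Fin n) // ∀ x, μ (p x) = μ x} := by
      rw [← Nat.card_eq_fintype_card]
      exact (Nat.card_eq_of_bijective Φ hbij).symm
    have step2 : Nat.card {p : Equiv.Perm (Fin n) // ∀ x, μ (p x) = μ x}
        = Nat.card {p : Equiv.Perm (Fin n) // μ' ∘ p = μ'} := by
      refine Nat.card_congr (Equiv.subtypeEquivRight fun p => ?_)
      rw [funext_iff]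
      constructor
      · intro hp x
        exact (hμ'iff (p x) (μ' x)).mpr ((hp x).trans (hμ' x))
      · intro hp x
        rw [hμ' (p x), hμ' x]
        exact congrArg vals (hp x)
    have step3 : Nat.card {p : Equiv.Perm (Fin n) // μ' ∘ p = μ'}
        = ∏ r, Nat.factorial (mult r) := by
      rw [Nat.card_eq_fintype_card, DomMulAct.stabilizer_card μ']
      refine Finset.prod_congr rfl fun r _ => ?_
      congr 1
      rw [Fintype.card_subtype, ← hmult r]
      apply Finset.card_bij (fun i _ => i)
      · intro i hi
        simp only [Finset.mem_filter, Finset.mem_univ, true_and] at hi ⊢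
        exact (hμ'iff i r).mp hi
      · intro i j _ _ h; exact h
      · intro i hi
        simp only [Finset.mem_filter, Finset.mem_univ, true_and] at hi
        exact ⟨i, by simp [((hμ'iff i r).mpr hi)]⟩
    rw [step1, step2, step3]
  -- put everything together
  have hDne : ((Nat.card {ψ : Equiv.Perm (Fin (2 * e)) //
      ψ * α = α * ψ ∧ ψ * σ = σ * ψ}) : ℚ) ≠ 0 := by
    rw [hD]
    exact_mod_cast hGpos.ne'
  rw [finsum_eq_sum_of_fintype, eq_div_iff hDne]
  push_cast [hD]
  calc (∑ c : Quot (LabelRel e n α σ μ), F c) * (Nat.card G : ℚ)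
      = ∑ c : Quot (LabelRel e n α σ μ), F c * (Nat.card G : ℚ) := by
        rw [Finset.sum_mul]
    _ = ∑ c : Quot (LabelRel e n α σ μ),
          ((Finset.univ.filter fun v' => Quot.mk (LabelRel e n α σ μ) v' = c).card : ℚ) := by
        refine Finset.sum_congr rfl fun c _ => ?_
        induction c using Quot.ind with
        | _ v => exact key v
    _ = ((Fintype.card (Labeling e n σ μ) : ℕ) : ℚ) := by
        rw [← Nat.cast_sum]
        congr 1
        rw [← Finset.card_univ]
        exact (Finset.card_eq_sum_card_fiberwise fun v _ => Finset.mem_univ _).symm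
    _ = (∏ r, Nat.factorial (mult r) : ℚ) := by
        rw [hcount]; push_cast; ring
end

section
/- Let Γ be a ribbon graph with at least N vertices, where N ≥ 1. Then the number of equivalence classes of N-rooted graphs whose underlying ribbon graph is isomorphic to Γ equals R_N^Γ/|Aut(Γ)|, where R_N^Γ is the number of ways to choose an ordered N-tuple of distinct vertices of Γ together with one half-edge incident to each chosen vertex; equivalently, R_N^Γ = Σ deg(v1)⋯deg(vN), the sum running over ordered N-tuples (v1, …, vN) of distinct vertices of Γ. -/
/-- An `N`-rooted ribbon graph on the half-edge set `Fin (2e)` whose underlying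
ribbon graph is isomorphic to `(α, σ)` : a ribbon graph `(α', σ')` isomorphic
to `(α, σ)`, together with `N` root half-edges lying in pairwise distinct
cycles of `σ'` (the ordered root vertices being the cycles containing them). -/
structure NRootedOn (N e : ℕ) (α σ : Equiv.Perm (Fin (2 * e))) where
  α' : Equiv.Perm (Fin (2 * e))
  σ' : Equiv.Perm (Fin (2 * e))
  hinv : ∀ h, α' (α' h) = h
  hfpf : ∀ h, α' h ≠ h
  htrans : ∀ h h', ∃ p ∈ Subgroup.closure ({α', σ'} : Set (Equiv.Perm (Fin (2 * e)))), p h = h'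
  hiso : ∃ ψ : Equiv.Perm (Fin (2 * e)), ψ * α = α' * ψ ∧ ψ * σ = σ' * ψ
  root : Fin N → Fin (2 * e)
  hdistinct : ∀ i j, σ'.SameCycle (root i) (root j) → i = j

/-- Isomorphism of `N`-rooted graphs: an isomorphism of the underlying ribbon
graphs carrying the `k`-th root to the `k`-th root for every `k`. -/
def NRootedOnRel (N e : ℕ) (α σ : Equiv.Perm (Fin (2 * e))) :
    NRootedOn N e α σ → NRootedOn N e α σ → Prop :=
  fun Γ Γ' => ∃ ψ : Equiv.Perm (Fin (2 * e)),
    ψ * Γ.α' = Γ'.α' * ψ ∧ ψ * Γ.σ' = Γ'.σ' * ψ ∧ ∀ k, ψ (Γ.root k) = Γ'.root k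

open Equiv MulAction

namespace Equiv.Perm

variable {X : Type*}

theorem SameCycle.of_semiconjBy {f f' g : Perm X} (h : SemiconjBy g f f') {x y : X}
    (hxy : f.SameCycle x y) : f'.SameCycle (g x) (g y) := by
  have hf' : f' = g * f * g⁻¹ := by rw [h.eq, mul_inv_cancel_right]
  exact hf' ▸ hxy.conj

theorem eq_one_of_mem_centralizer_of_apply_eq {S : Set (Perm X)}
    (htrans : ∀ x y : X, ∃ p ∈ Subgroup.closure S, p x = y) {ψ : Perm X}
    (hψ : ψ ∈ Subgroup.centralizer S) {x₀ : X} (hfix : ψ x₀ = x₀) : ψ = 1 := by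
  rw [← Subgroup.centralizer_closure] at hψ
  ext x
  obtain ⟨p, hp, rfl⟩ := htrans x₀ x
  have hcomm : p * ψ = ψ * p := hψ p hp
  rw [Perm.one_apply, ← Perm.mul_apply, ← hcomm, Perm.mul_apply, hfix]

end Equiv.Perm

section RibbonGraph

variable {X : Type*}

abbrev ribbonAut (α σ : Perm X) : Subgroup (Perm X) :=
  Subgroup.centralizer {α, σ}

theorem mem_ribbonAut_iff {α σ ψ : Perm X} :
    ψ ∈ ribbonAut α σ ↔ Commute ψ α ∧ Commute ψ σ := by
  simp only [Subgroup.mem_centralizer_iff, Set.forall_mem_insert, Set.mem_singleton_iff, forall_eq]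
  exact and_congr eq_comm eq_comm

/-- The set counted by `R_N^Γ`, as a sub-`Aut(Γ)`-action of `Fin N → X`. -/
def rootTuples (N : ℕ) (α σ : Perm X) : SubMulAction (ribbonAut α σ) (Fin N → X) where
  carrier := {r | ∀ i j, σ.SameCycle (r i) (r j) → i = j}
  smul_mem' ψ r hr i j hij := hr i j <| by
    simpa [Subgroup.smul_def, Perm.smul_def] using
      Perm.SameCycle.of_semiconjBy (mem_ribbonAut_iff.1 ψ.2).2.inv_left hij

theorem stabilizer_rootTuples_eq_bot {N : ℕ} (hN : 1 ≤ N) {α σ : Perm X}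
    (htrans : ∀ x y : X, ∃ p ∈ Subgroup.closure {α, σ}, p x = y) (r : rootTuples N α σ) :
    stabilizer (ribbonAut α σ) r = ⊥ := by
  rw [Subgroup.eq_bot_iff_forall]
  intro ψ hψ
  have hfix : ψ.1 (r.1 ⟨0, hN⟩) = r.1 ⟨0, hN⟩ :=
    congrFun (congrArg Subtype.val (mem_stabilizer_iff.1 hψ)) ⟨0, hN⟩
  exact Subtype.ext (Perm.eq_one_of_mem_centralizer_of_apply_eq htrans ψ.2 hfix)

theorem card_rootTuples {N : ℕ} (hN : 1 ≤ N) {α σ : Perm X}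
    (htrans : ∀ x y : X, ∃ p ∈ Subgroup.closure {α, σ}, p x = y) :
    Nat.card (rootTuples N α σ) =
      Nat.card (orbitRel.Quotient (ribbonAut α σ) (rootTuples N α σ)) *
        Nat.card (ribbonAut α σ) := by
  rw [Nat.card_congr (selfEquivOrbitsQuotientProd (stabilizer_rootTuples_eq_bot hN htrans)),
    Nat.card_prod]

end RibbonGraph

section RootedGraph

variable {N e : ℕ} {α σ : Perm (Fin (2 * e))}

theorem nRootedOnRel_equivalence : Equivalence (NRootedOnRel N e α σ) where
  refl _ := ⟨1, SemiconjBy.one_left _, SemiconjBy.one_left _, fun _ => rfl⟩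
  symm := by
    rintro Γ Γ' ⟨ψ, hα, hσ, hroot⟩
    refine ⟨ψ⁻¹, SemiconjBy.inv_symm_left hα, SemiconjBy.inv_symm_left hσ, fun k => ?_⟩
    rw [← hroot k]
    exact ψ.symm_apply_apply _
  trans := by
    rintro Γ Γ' Γ'' ⟨ψ, hα, hσ, hroot⟩ ⟨φ, hα', hσ', hroot'⟩
    exact ⟨φ * ψ, SemiconjBy.mul_left hα' hα, SemiconjBy.mul_left hσ' hσ, fun k => by
      rw [Perm.mul_apply, hroot, hroot']⟩

namespace NRootedOn

def ofRoots (hinv : ∀ h, α (α h) = h) (hfpf : ∀ h, α h ≠ h)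
    (htrans : ∀ h h' : Fin (2 * e),
      ∃ p ∈ Subgroup.closure ({α, σ} : Set (Perm (Fin (2 * e)))), p h = h')
    (r : rootTuples N α σ) : NRootedOn N e α σ :=
  ⟨α, σ, hinv, hfpf, htrans, ⟨1, SemiconjBy.one_left _, SemiconjBy.one_left _⟩, r.1, r.2⟩

variable (hinv : ∀ h, α (α h) = h) (hfpf : ∀ h, α h ≠ h)
  (htrans : ∀ h h' : Fin (2 * e),
    ∃ p ∈ Subgroup.closure ({α, σ} : Set (Perm (Fin (2 * e)))), p h = h')

theorem rel_ofRoots_iff {r r' : rootTuples N α σ} :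
    NRootedOnRel N e α σ (ofRoots hinv hfpf htrans r) (ofRoots hinv hfpf htrans r') ↔
      r' ∈ orbit (ribbonAut α σ) r := by
  constructor
  · rintro ⟨ψ, hα, hσ, hroot⟩
    exact ⟨⟨ψ, mem_ribbonAut_iff.2 ⟨hα, hσ⟩⟩, Subtype.ext (funext hroot)⟩
  · rintro ⟨ψ, rfl⟩
    exact ⟨ψ, (mem_ribbonAut_iff.1 ψ.2).1, (mem_ribbonAut_iff.1 ψ.2).2, fun _ => rfl⟩

theorem exists_rel_ofRoots (Γ : NRootedOn N e α σ) :
    ∃ r, NRootedOnRel N e α σ (ofRoots hinv hfpf htrans r) Γ := by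
  obtain ⟨ψ, hα, hσ⟩ := Γ.hiso
  refine ⟨⟨fun k => ψ⁻¹ (Γ.root k), fun i j hij => Γ.hdistinct i j ?_⟩,
    ψ, hα, hσ, fun k => ψ.apply_symm_apply (Γ.root k)⟩
  simpa using Perm.SameCycle.of_semiconjBy hσ hij

noncomputable def orbitsEquivQuot :
    orbitRel.Quotient (ribbonAut α σ) (rootTuples N α σ) ≃ Quot (NRootedOnRel N e α σ) :=
  Equiv.ofBijective
    (Quotient.lift (fun r => Quot.mk _ (ofRoots hinv hfpf htrans r)) fun _ _ hrs =>
      (Quot.sound ((rel_ofRoots_iff hinv hfpf htrans).2 hrs)).symm)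
    ⟨by
      rintro ⟨r⟩ ⟨r'⟩ h
      have hrel := (nRootedOnRel_equivalence.quot_mk_eq_iff _ _).1 h
      exact (Quotient.sound ((rel_ofRoots_iff hinv hfpf htrans).1 hrel)).symm,
    by
      rintro ⟨Γ⟩
      obtain ⟨r, hr⟩ := exists_rel_ofRoots hinv hfpf htrans Γ
      exact ⟨Quotient.mk'' r, Quot.sound hr⟩⟩

end NRootedOn

end RootedGraph

theorem stmt14_general (N e : ℕ) (hN : 1 ≤ N)
    (α σ : Equiv.Perm (Fin (2 * e)))
    (hinv : ∀ h, α (α h) = h)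
    (hfpf : ∀ h, α h ≠ h)
    (htrans : ∀ h h' : Fin (2 * e),
      ∃ p ∈ Subgroup.closure ({α, σ} : Set (Equiv.Perm (Fin (2 * e)))), p h = h') :
    (Nat.card (Quot (NRootedOnRel N e α σ)) : ℚ)
      = (Nat.card {r : Fin N → Fin (2 * e) //
            ∀ i j, σ.SameCycle (r i) (r j) → i = j} : ℚ)
        / (Nat.card {ψ : Equiv.Perm (Fin (2 * e)) //
            ψ * α = α * ψ ∧ ψ * σ = σ * ψ} : ℚ) := by
  have hAut : Nat.card {ψ : Perm (Fin (2 * e)) // ψ * α = α * ψ ∧ ψ * σ = σ * ψ} =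
      Nat.card (ribbonAut α σ) :=
    Nat.card_congr (Equiv.subtypeEquivRight fun _ => mem_ribbonAut_iff.symm)
  have hAut_ne : (Nat.card (ribbonAut α σ) : ℚ) ≠ 0 := by exact_mod_cast Nat.card_pos.ne'
  rw [hAut, eq_div_iff hAut_ne, ← Nat.card_congr (NRootedOn.orbitsEquivQuot hinv hfpf htrans)]
  exact_mod_cast (card_rootTuples hN htrans).symm

/-- for a ribbon graph `Γ = (α, σ)` with at least `N ≥ 1`
vertices, the number of equivalence classes of `N`-rooted graphs whose
underlying ribbon graph is isomorphic to `Γ` equals `R_N^Γ / |Aut(Γ)|`, where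
`R_N^Γ` is the number of choices of an ordered `N`-tuple of distinct vertices
of `Γ` together with one half-edge incident to each chosen vertex (equivalently,
of an `N`-tuple of half-edges lying in pairwise distinct cycles of `σ`). -/
theorem stmt14 (N e : ℕ) (hN : 1 ≤ N) (he : 1 ≤ e)
    (α σ : Equiv.Perm (Fin (2 * e)))
    (hinv : ∀ h, α (α h) = h)
    (hfpf : ∀ h, α h ≠ h)
    (htrans : ∀ h h' : Fin (2 * e),
      ∃ p ∈ Subgroup.closure ({α, σ} : Set (Equiv.Perm (Fin (2 * e)))), p h = h')
    (hver : N ≤ permCycleCount σ) :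
    (Nat.card (Quot (NRootedOnRel N e α σ)) : ℚ)
      = (Nat.card {r : Fin N → Fin (2 * e) //
            ∀ i j, σ.SameCycle (r i) (r j) → i = j} : ℚ)
        / (Nat.card {ψ : Equiv.Perm (Fin (2 * e)) //
            ψ * α = α * ψ ∧ ψ * σ = σ * ψ} : ℚ) :=
  stmt14_general N e hN α σ hinv hfpf htrans
end

section
/- For real w > log 2, define t(w) = −√((1 + 2e^{−w})/(1 − 2e^{−w})). Then t is differentiable on (log 2, ∞) and for all w > log 2, (t(w)² − 1)³ · t′(w) / t(w)⁴ = 128 · e^{−4w}/(1 − 4e^{−2w})^{5/2}. (This is the identity expressing the differential W_{1,1}(t) = −(t²−1)³ dt/(128 t⁴) of the harmonic oscillator curve with c² = 2 in the Laplace-transform variable w, from which the closed form of C_{1,1} is extracted.) -/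
/-- `t(w) = -√((1 + 2e^{-w})/(1 - 2e^{-w}))`. -/
noncomputable def tfun : ℝ → ℝ := fun w =>
  -Real.sqrt ((1 + 2 * Real.exp (-w)) / (1 - 2 * Real.exp (-w)))

lemma exp_lt_half {w : ℝ} (hw : Real.log 2 < w) : 2 * Real.exp (-w) < 1 := by
  have h : Real.exp (-w) < Real.exp (-Real.log 2) := Real.exp_lt_exp.2 (by linarith)
  rw [Real.exp_neg (Real.log 2), Real.exp_log (by norm_num : (0:ℝ) < 2)] at h
  linarith

lemma tfun_hasDeriv (w : ℝ) (hw : Real.log 2 < w) :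
    HasDerivAt tfun
      (-(1 / (2 * Real.sqrt ((1 + 2 * Real.exp (-w)) / (1 - 2 * Real.exp (-w)))) *
        ((2 * -Real.exp (-w) * (1 - 2 * Real.exp (-w)) -
          (1 + 2 * Real.exp (-w)) * -(2 * -Real.exp (-w))) /
          (1 - 2 * Real.exp (-w)) ^ 2))) w := by
  have hb : 0 < 1 - 2 * Real.exp (-w) := by linarith [exp_lt_half hw]
  have ha : 0 < 1 + 2 * Real.exp (-w) := by positivity
  have hu : HasDerivAt (fun w : ℝ => Real.exp (-w)) (-Real.exp (-w)) w := by
    simpa using ((hasDerivAt_id w).neg.exp)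
  have hnum : HasDerivAt (fun w : ℝ => 1 + 2 * Real.exp (-w)) (2 * -Real.exp (-w)) w :=
    (hu.const_mul 2).const_add 1
  have hden : HasDerivAt (fun w : ℝ => 1 - 2 * Real.exp (-w)) (-(2 * -Real.exp (-w))) w :=
    (hu.const_mul 2).const_sub 1
  have hf : HasDerivAt (fun w : ℝ => (1 + 2 * Real.exp (-w)) / (1 - 2 * Real.exp (-w)))
      ((2 * -Real.exp (-w) * (1 - 2 * Real.exp (-w)) -
        (1 + 2 * Real.exp (-w)) * -(2 * -Real.exp (-w))) / (1 - 2 * Real.exp (-w)) ^ 2) w :=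
    hnum.div hden hb.ne'
  have hr0 : (1 + 2 * Real.exp (-w)) / (1 - 2 * Real.exp (-w)) ≠ 0 :=
    ne_of_gt (div_pos ha hb)
  have hs := (Real.hasDerivAt_sqrt hr0).comp w hf
  exact hs.neg

/-- `t` is differentiable on `(log 2, ∞)` and satisfies
`(t(w)² - 1)³ t′(w) / t(w)⁴ = 128 e^{-4w}/(1 - 4e^{-2w})^{5/2}` there. -/
theorem stmt18 :
    (∀ w : ℝ, Real.log 2 < w → DifferentiableAt ℝ tfun w) ∧
    ∀ w : ℝ, Real.log 2 < w →
      (tfun w ^ 2 - 1) ^ 3 * deriv tfun w / tfun w ^ 4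
        = 128 * Real.exp (-(4 * w)) / Real.sqrt (1 - 4 * Real.exp (-(2 * w))) ^ 5 := by
  constructor
  · exact fun w hw => (tfun_hasDeriv w hw).differentiableAt
  intro w hw
  have hb : 0 < 1 - 2 * Real.exp (-w) := by linarith [exp_lt_half hw]
  have ha : 0 < 1 + 2 * Real.exp (-w) := by positivity
  have hd := (tfun_hasDeriv w hw).deriv
  show ((-Real.sqrt ((1 + 2 * Real.exp (-w)) / (1 - 2 * Real.exp (-w)))) ^ 2 - 1) ^ 3 *
      deriv tfun w / (-Real.sqrt ((1 + 2 * Real.exp (-w)) / (1 - 2 * Real.exp (-w)))) ^ 4 = _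
  set u := Real.exp (-w) with hudef
  have hrw : Real.sqrt ((1 + 2 * u) / (1 - 2 * u))
      = Real.sqrt (1 + 2 * u) / Real.sqrt (1 - 2 * u) := Real.sqrt_div ha.le _
  set sa := Real.sqrt (1 + 2 * u) with hsadef
  set sb := Real.sqrt (1 - 2 * u) with hsbdef
  have hsa : sa ^ 2 = 1 + 2 * u := Real.sq_sqrt ha.le
  have hsb : sb ^ 2 = 1 - 2 * u := Real.sq_sqrt hb.le
  have hsa0 : 0 < sa := Real.sqrt_pos.2 ha
  have hsb0 : 0 < sb := Real.sqrt_pos.2 hb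
  have he4 : Real.exp (-(4 * w)) = u ^ 4 := by
    rw [show -(4 * w) = -w + -w + -w + -w by ring, Real.exp_add, Real.exp_add, Real.exp_add]
    ring
  have hsab : Real.sqrt (1 - 4 * Real.exp (-(2 * w))) = sa * sb := by
    have he2 : Real.exp (-(2 * w)) = u * u := by
      rw [show -(2 * w) = -w + -w by ring, Real.exp_add]
    rw [show (1 : ℝ) - 4 * Real.exp (-(2 * w)) = (1 + 2 * u) * (1 - 2 * u) by rw [he2]; ring,
      Real.sqrt_mul ha.le]
  have hD : deriv tfun w = 2 * u / (sa * sb ^ 3) := by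
    rw [hd, hrw,
      show 2 * -u * (1 - 2 * u) - (1 + 2 * u) * -(2 * -u) = -(4 * u) by ring,
      show ((1 : ℝ) - 2 * u) ^ 2 = sb ^ 4 by rw [show sb ^ 4 = (sb ^ 2) ^ 2 by ring, hsb]]
    field_simp
    ring
  have hts : (-(sa / sb)) ^ 2 - 1 = 4 * u / sb ^ 2 := by
    field_simp
    linarith [hsa, hsb]
  rw [hrw, he4, hsab, hD, hts]
  rw [div_pow, show (-(sa / sb)) ^ 4 = sa ^ 4 / sb ^ 4 by rw [Even.neg_pow (by decide), div_pow]]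
  field_simp
  ring
end
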